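/- Under the ray-based channel model, the fourth-order moments of the channel entries satisfy, for all 1 ≤ m, n, m', n' ≤ M: E[conj(h_m) · h_n · conj(h_{m'}) · h_{n'}] = (β²/N_P) · [ 2·E(n−m+n'−m') + (N_P − 1)·( E(n−m)·E(n'−m') + E(n'−m)·E(n−m') ) ]. -/

import Mathlib

/-!
Write `h_m = N_P^{-1/2} Σ_p α_p e_m(φ_p)` and expand the fourth moment into a sum over index
quadruples `(p, q, r, s)`. Independence of the gains from the angles factors each term into a
moment of the gains times a moment of the angles. For independent, centred, circular gains
(`E α = E α² = 0`, `E |α|⁴ = 2β²`) the gain moment `E[ᾱ_p α_q ᾱ_r α_s]` is `β²` times the number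
of the two pairings `p = q, r = s` and `p = s, q = r` that hold. Each pairing leaves a double sum
`Σ_{p,r} E[f(φ_p) g(φ_r)]` over i.i.d. angles, which is `N_P E[f g] + N_P (N_P - 1) E f · E g`.
-/

open MeasureTheory ProbabilityTheory ComplexConjugate
open scoped ENNReal

section Expansion

variable {Ω : Type*} [MeasurableSpace Ω] {μ : Measure Ω}

theorem integral_sum_mul_sum_mul_sum_mul_sum {ι : Type*} [Fintype ι] (f g u v : ι → Ω → ℂ)
    (hint : ∀ p q r s, Integrable (fun ω => f p ω * g q ω * u r ω * v s ω) μ) :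
    ∫ ω, (∑ p, f p ω) * (∑ q, g q ω) * (∑ r, u r ω) * (∑ s, v s ω) ∂μ =
      ∑ p, ∑ q, ∑ r, ∑ s, ∫ ω, f p ω * g q ω * u r ω * v s ω ∂μ := by
  have hexpand : ∀ ω, (∑ p, f p ω) * (∑ q, g q ω) * (∑ r, u r ω) * (∑ s, v s ω) =
      ∑ p, ∑ q, ∑ r, ∑ s, f p ω * g q ω * u r ω * v s ω := by
    intro ω
    rw [mul_assoc, mul_assoc]
    simp only [Finset.sum_mul]
    simp only [Finset.mul_sum, mul_assoc]
  simp only [hexpand]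
  rw [integral_finsetSum _ fun p _ => integrable_finsetSum _ fun q _ =>
    integrable_finsetSum _ fun r _ => integrable_finsetSum _ fun s _ => hint p q r s]
  refine Finset.sum_congr rfl fun p _ => ?_
  rw [integral_finsetSum _ fun q _ =>
    integrable_finsetSum _ fun r _ => integrable_finsetSum _ fun s _ => hint p q r s]
  refine Finset.sum_congr rfl fun q _ => ?_
  rw [integral_finsetSum _ fun r _ => integrable_finsetSum _ fun s _ => hint p q r s]
  exact Finset.sum_congr rfl fun r _ => integral_finsetSum _ fun s _ => hint p q r s

theorem MeasureTheory.MemLp.integrable_mul_mul_mul {𝕜 : Type*} [NormedRing 𝕜] {f₁ f₂ f₃ f₄ : Ω → 𝕜}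
    (h₁ : MemLp f₁ 4 μ) (h₂ : MemLp f₂ 4 μ) (h₃ : MemLp f₃ 4 μ) (h₄ : MemLp f₄ 4 μ) :
    Integrable (fun ω => f₁ ω * f₂ ω * f₃ ω * f₄ ω) μ := by
  have : ENNReal.HolderTriple 4 4 2 :=
    ⟨by rw [show (4 : ℝ≥0∞) = 2 * 2 by norm_num, ENNReal.mul_inv (by simp) (by simp), ← add_mul,
      ENNReal.inv_two_add_inv_two, one_mul]⟩
  have h : MemLp (fun ω => f₁ ω * f₂ ω * (f₃ ω * f₄ ω)) 1 μ :=
    (h₄.mul' h₃ (r := 2)).mul' (h₂.mul' h₁ (r := 2))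
  simpa only [mul_assoc, memLp_one_iff_integrable] using h

end Expansion

section Combinatorics

variable {ι R : Type*} [Fintype ι] [DecidableEq ι]

theorem sum_sum_ite_eq_mul_add [CommRing R] (a b : R) :
    ∑ p : ι, ∑ r : ι, (if p = r then a else b) =
      Fintype.card ι * a + Fintype.card ι * (Fintype.card ι - 1) * b := by
  have h : ∀ p r : ι, (if p = r then a else b) = b + if p = r then a - b else 0 := by
    intro p r
    split_ifs <;> ring
  simp only [h, Finset.sum_add_distrib, Finset.sum_ite_eq, Finset.mem_univ, if_true,
    Finset.sum_const, Finset.card_univ, nsmul_eq_mul]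
  ring

theorem sum_pairings_mul [CommSemiring R] (c : R) (F : ι → ι → ι → ι → R) :
    ∑ p, ∑ q, ∑ r, ∑ s, ((if p = q ∧ r = s then c else 0) + (if p = s ∧ q = r then c else 0)) *
      F p q r s = c * (∑ p, ∑ r, F p p r r + ∑ p, ∑ q, F p q q p) := by
  simp [add_mul, ite_mul, Finset.sum_add_distrib, ite_and, Finset.sum_ite_eq, mul_add,
    Finset.mul_sum]

end Combinatorics

section IdenticallyDistributed

variable {Ω ι 𝓧 𝕜 : Type*} [MeasurableSpace Ω] {μ : Measure Ω} [DecidableEq ι]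
  [MeasurableSpace 𝓧] [RCLike 𝕜] {φ : ι → Ω → 𝓧} {i₀ : ι} {f g : 𝓧 → 𝕜}

theorem integral_comp_mul_comp_of_iid (hind : iIndepFun φ μ) (hmeas : ∀ p, Measurable (φ p))
    (hid : ∀ p, IdentDistrib (φ p) (φ i₀) μ μ) (hf : Measurable f) (hg : Measurable g)
    (p r : ι) :
    ∫ ω, f (φ p ω) * g (φ r ω) ∂μ = if p = r then ∫ ω, f (φ i₀ ω) * g (φ i₀ ω) ∂μ
      else (∫ ω, f (φ i₀ ω) ∂μ) * ∫ ω, g (φ i₀ ω) ∂μ := by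
  split_ifs with hpr
  · subst hpr
    exact ((hid p).comp (hf.mul hg)).integral_eq
  · rw [(hind.indepFun hpr).integral_fun_comp_mul_comp (hmeas p).aemeasurable
      (hmeas r).aemeasurable hf.aestronglyMeasurable hg.aestronglyMeasurable]
    exact congr_arg₂ (· * ·) ((hid p).comp hf).integral_eq ((hid r).comp hg).integral_eq

theorem sum_sum_integral_comp_mul_comp_of_iid [Fintype ι] (hind : iIndepFun φ μ)
    (hmeas : ∀ p, Measurable (φ p)) (hid : ∀ p, IdentDistrib (φ p) (φ i₀) μ μ)
    (hf : Measurable f) (hg : Measurable g) :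
    ∑ p, ∑ r, ∫ ω, f (φ p ω) * g (φ r ω) ∂μ =
      Fintype.card ι * ∫ ω, f (φ i₀ ω) * g (φ i₀ ω) ∂μ +
        Fintype.card ι * (Fintype.card ι - 1) * ((∫ ω, f (φ i₀ ω) ∂μ) * ∫ ω, g (φ i₀ ω) ∂μ) := by
  rw [← sum_sum_ite_eq_mul_add]
  exact Finset.sum_congr rfl fun p _ => Finset.sum_congr rfl fun r _ =>
    integral_comp_mul_comp_of_iid hind hmeas hid hf hg p r

end IdenticallyDistributed

section CircularMoments

variable {Ω ι : Type*} [MeasurableSpace Ω] {μ : Measure Ω} {α : ι → Ω → ℂ}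

theorem integral_conj_mul_self_mul_conj_mul_self_of_ne (hind : iIndepFun α μ)
    (hmeas : ∀ p, Measurable (α p)) {p r : ι} (hpr : p ≠ r) :
    ∫ ω, conj (α p ω) * α p ω * conj (α r ω) * α r ω ∂μ =
      (∫ ω, ‖α p ω‖ ^ 2 ∂μ : ℝ) * (∫ ω, ‖α r ω‖ ^ 2 ∂μ : ℝ) := by
  have hnormSq : ∀ ω, conj (α p ω) * α p ω * conj (α r ω) * α r ω =
      ((‖α p ω‖ ^ 2 : ℝ) : ℂ) * ((‖α r ω‖ ^ 2 : ℝ) : ℂ) := by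
    intro ω
    rw [mul_assoc _ (conj (α r ω)), Complex.conj_mul', Complex.conj_mul']
    push_cast
    rfl
  simp only [hnormSq, ← integral_complex_ofReal]
  have hsq : Measurable fun z : ℂ => ((‖z‖ ^ 2 : ℝ) : ℂ) := by fun_prop
  exact (hind.indepFun hpr).integral_fun_comp_mul_comp (hmeas p).aemeasurable
    (hmeas r).aemeasurable hsq.aestronglyMeasurable hsq.aestronglyMeasurable

variable [Fintype ι] [DecidableEq ι]

theorem integral_conj_mul_mul_conj_mul_eq_zero (hind : iIndepFun α μ)
    (hmeas : ∀ p, Measurable (α p)) (h1 : ∀ p, ∫ ω, α p ω ∂μ = 0)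
    (h2 : ∀ p, ∫ ω, α p ω ^ 2 ∂μ = 0) {p q r s : ι} (hpq_rs : ¬(p = q ∧ r = s))
    (hps_qr : ¬(p = s ∧ q = r)) :
    ∫ ω, conj (α p ω) * α q ω * conj (α r ω) * α s ω ∂μ = 0 := by
  set F : ι → ℂ → ℂ := fun j z => (if j = p then conj z else 1) * (if j = q then z else 1) *
    (if j = r then conj z else 1) * (if j = s then z else 1) with hF
  have hprod : ∀ ω, conj (α p ω) * α q ω * conj (α r ω) * α s ω = ∏ j, F j (α j ω) := by
    intro ω
    simp only [hF, Finset.prod_mul_distrib, Finset.prod_ite_eq', Finset.mem_univ, if_true]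
  have hFmeas : ∀ j, Measurable (F j) := by
    intro j
    simp only [hF]
    split_ifs <;> fun_prop
  rw [integral_congr_ae (ae_of_all _ hprod), hind.integral_fun_prod_comp
    (fun j => (hmeas j).aemeasurable) (fun j => (hFmeas j).aestronglyMeasurable)]
  -- Some index occurs exactly once (its factor has mean `E α = 0` or `E ᾱ = 0`), unless
  -- `p = r ≠ q = s`, where the factor of `p` has mean `E ᾱ² = 0`.
  have hlone : (p ≠ q ∧ p ≠ r ∧ p ≠ s) ∨ (q ≠ p ∧ q ≠ r ∧ q ≠ s) ∨
      (r ≠ p ∧ r ≠ q ∧ r ≠ s) ∨ (s ≠ p ∧ s ≠ q ∧ s ≠ r) ∨ (p = r ∧ q = s ∧ p ≠ q) := by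
    grind
  rcases hlone with ⟨hq, hr, hs⟩ | ⟨hp, hr, hs⟩ | ⟨hp, hq, hs⟩ | ⟨hp, hq, hr⟩ | ⟨rfl, rfl, hpq⟩
  · exact Finset.prod_eq_zero (Finset.mem_univ p) (by simp [hF, hq, hr, hs, integral_conj, h1])
  · exact Finset.prod_eq_zero (Finset.mem_univ q) (by simp [hF, hp, hr, hs, h1])
  · exact Finset.prod_eq_zero (Finset.mem_univ r) (by simp [hF, hp, hq, hs, integral_conj, h1])
  · exact Finset.prod_eq_zero (Finset.mem_univ s) (by simp [hF, hp, hq, hr, h1])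
  · exact Finset.prod_eq_zero (Finset.mem_univ p)
      (by simp [hF, hpq, ← pow_two, ← map_pow, integral_conj, h2])

theorem integral_conj_mul_mul_conj_mul (hind : iIndepFun α μ)
    (hmeas : ∀ p, Measurable (α p)) (h1 : ∀ p, ∫ ω, α p ω ∂μ = 0)
    (h2 : ∀ p, ∫ ω, α p ω ^ 2 ∂μ = 0) {β : ℝ} (hvar : ∀ p, ∫ ω, ‖α p ω‖ ^ 2 ∂μ = β)
    (h4 : ∀ p, ∫ ω, ‖α p ω‖ ^ 4 ∂μ = 2 * β ^ 2) (p q r s : ι) :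
    ∫ ω, conj (α p ω) * α q ω * conj (α r ω) * α s ω ∂μ =
      (if p = q ∧ r = s then (β : ℂ) ^ 2 else 0) + (if p = s ∧ q = r then (β : ℂ) ^ 2 else 0) := by
  by_cases hpq_rs : p = q ∧ r = s
  · obtain ⟨rfl, rfl⟩ := hpq_rs
    by_cases hpr : p = r
    · subst hpr
      have hnorm4 : ∀ ω, conj (α p ω) * α p ω * conj (α p ω) * α p ω =
          ((‖α p ω‖ ^ 4 : ℝ) : ℂ) := by
        intro ω
        rw [mul_assoc _ (conj (α p ω)), Complex.conj_mul']
        push_cast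
        ring
      rw [integral_congr_ae (ae_of_all _ hnorm4), integral_complex_ofReal, h4, if_pos ⟨rfl, rfl⟩]
      push_cast
      ring
    · rw [integral_conj_mul_self_mul_conj_mul_self_of_ne hind hmeas hpr, hvar, hvar,
        if_pos ⟨rfl, rfl⟩, if_neg fun h => hpr h.1]
      ring
  by_cases hps_qr : p = s ∧ q = r
  · obtain ⟨rfl, rfl⟩ := hps_qr
    have hpq : p ≠ q := fun h => hpq_rs ⟨h, h.symm⟩
    have hswap : ∀ ω, conj (α p ω) * α q ω * conj (α q ω) * α p ω =
        conj (α p ω) * α p ω * conj (α q ω) * α q ω := fun ω => by ring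
    rw [integral_congr_ae (ae_of_all _ hswap),
      integral_conj_mul_self_mul_conj_mul_self_of_ne hind hmeas hpq, hvar, hvar,
      if_neg hpq_rs, if_pos ⟨rfl, rfl⟩]
    ring
  · rw [integral_conj_mul_mul_conj_mul_eq_zero hind hmeas h1 h2 hpq_rs hps_qr, if_neg hpq_rs,
      if_neg hps_qr, add_zero]

end CircularMoments

section RandomSum

variable {Ω ι 𝓧 : Type*} [MeasurableSpace Ω] {μ : Measure Ω} [MeasurableSpace 𝓧]
  {α : ι → Ω → ℂ} {φ : ι → Ω → 𝓧} {u v u' v' : 𝓧 → ℂ}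

theorem integral_conj_mul_comp_mul_mul_comp_eq_mul
    (hαφ : IndepFun (fun ω p => α p ω) (fun ω p => φ p ω) μ)
    (hαmeas : ∀ p, Measurable (α p)) (hφmeas : ∀ p, Measurable (φ p))
    (hu : Measurable u) (hv : Measurable v) (hu' : Measurable u') (hv' : Measurable v')
    (p q r s : ι) :
    ∫ ω, conj (α p ω * u (φ p ω)) * (α q ω * v (φ q ω)) * conj (α r ω * u' (φ r ω)) *
        (α s ω * v' (φ s ω)) ∂μ =
      (∫ ω, conj (α p ω) * α q ω * conj (α r ω) * α s ω ∂μ) *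
        ∫ ω, conj (u (φ p ω)) * v (φ q ω) * conj (u' (φ r ω)) * v' (φ s ω) ∂μ := by
  have hsplit : ∀ ω, conj (α p ω * u (φ p ω)) * (α q ω * v (φ q ω)) *
      conj (α r ω * u' (φ r ω)) * (α s ω * v' (φ s ω)) =
      conj (α p ω) * α q ω * conj (α r ω) * α s ω *
        (conj (u (φ p ω)) * v (φ q ω) * conj (u' (φ r ω)) * v' (φ s ω)) := fun ω => by
    simp only [map_mul]
    ring
  simp only [hsplit]
  exact hαφ.integral_fun_comp_mul_comp (f := fun a => conj (a p) * a q * conj (a r) * a s)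
    (g := fun x => conj (u (x p)) * v (x q) * conj (u' (x r)) * v' (x s))
    (measurable_pi_lambda _ hαmeas).aemeasurable (measurable_pi_lambda _ hφmeas).aemeasurable
    (by fun_prop : Measurable _).aestronglyMeasurable
    (by fun_prop : Measurable _).aestronglyMeasurable

theorem MeasureTheory.MemLp.mul_comp_of_norm_le {p : ℝ≥0∞} {a : Ω → ℂ} (ha : MemLp a p μ)
    {X : Ω → 𝓧} (hX : Measurable X) {w : 𝓧 → ℂ} (hw : Measurable w) {C : ℝ} (hwC : ∀ x, ‖w x‖ ≤ C) :
    MemLp (fun ω => a ω * w (X ω)) p μ :=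
  ha.of_le_mul (c := C) (ha.1.mul (hw.comp hX).aestronglyMeasurable) (ae_of_all _ fun ω => by
    rw [norm_mul, mul_comm]
    exact mul_le_mul_of_nonneg_right (hwC _) (norm_nonneg _))

variable [Fintype ι] [DecidableEq ι]

theorem integral_conj_sum_mul_sum_mul_conj_sum_mul_sum
    (hαind : iIndepFun α μ) (hαmeas : ∀ p, Measurable (α p)) (hαL4 : ∀ p, MemLp (α p) 4 μ)
    (hα1 : ∀ p, ∫ ω, α p ω ∂μ = 0) (hα2 : ∀ p, ∫ ω, α p ω ^ 2 ∂μ = 0) {β : ℝ}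
    (hαvar : ∀ p, ∫ ω, ‖α p ω‖ ^ 2 ∂μ = β) (hα4 : ∀ p, ∫ ω, ‖α p ω‖ ^ 4 ∂μ = 2 * β ^ 2)
    (hφind : iIndepFun φ μ) (hφmeas : ∀ p, Measurable (φ p)) {i₀ : ι}
    (hφid : ∀ p, IdentDistrib (φ p) (φ i₀) μ μ)
    (hαφ : IndepFun (fun ω p => α p ω) (fun ω p => φ p ω) μ)
    (hu : Measurable u) (hv : Measurable v) (hu' : Measurable u') (hv' : Measurable v')
    {C : ℝ} (huC : ∀ x, ‖u x‖ ≤ C) (hvC : ∀ x, ‖v x‖ ≤ C) (hu'C : ∀ x, ‖u' x‖ ≤ C)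
    (hv'C : ∀ x, ‖v' x‖ ≤ C) :
    ∫ ω, conj (∑ p, α p ω * u (φ p ω)) * (∑ p, α p ω * v (φ p ω)) *
        conj (∑ p, α p ω * u' (φ p ω)) * (∑ p, α p ω * v' (φ p ω)) ∂μ =
      (β : ℂ) ^ 2 * (2 * Fintype.card ι *
          ∫ ω, conj (u (φ i₀ ω)) * v (φ i₀ ω) * (conj (u' (φ i₀ ω)) * v' (φ i₀ ω)) ∂μ +
        Fintype.card ι * (Fintype.card ι - 1) *
          ((∫ ω, conj (u (φ i₀ ω)) * v (φ i₀ ω) ∂μ) *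
              (∫ ω, conj (u' (φ i₀ ω)) * v' (φ i₀ ω) ∂μ) +
            (∫ ω, conj (u (φ i₀ ω)) * v' (φ i₀ ω) ∂μ) *
              ∫ ω, conj (u' (φ i₀ ω)) * v (φ i₀ ω) ∂μ)) := by
  have hL4 : ∀ {w : 𝓧 → ℂ}, Measurable w → (∀ x, ‖w x‖ ≤ C) → ∀ p,
      MemLp (fun ω => α p ω * w (φ p ω)) 4 μ :=
    fun hw hwC p => (hαL4 p).mul_comp_of_norm_le (hφmeas p) hw hwC
  have hint : ∀ p q r s, Integrable (fun ω => conj (α p ω * u (φ p ω)) * (α q ω * v (φ q ω)) *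
      conj (α r ω * u' (φ r ω)) * (α s ω * v' (φ s ω))) μ := fun p q r s =>
    (hL4 hu huC p).star.integrable_mul_mul_mul (hL4 hv hvC q) (hL4 hu' hu'C r).star
      (hL4 hv' hv'C s)
  simp only [map_sum]
  rw [integral_sum_mul_sum_mul_sum_mul_sum _ _ _ _ hint]
  simp only [integral_conj_mul_comp_mul_mul_comp_eq_mul hαφ hαmeas hφmeas hu hv hu' hv',
    integral_conj_mul_mul_conj_mul hαind hαmeas hα1 hα2 hαvar hα4, sum_pairings_mul]
  have hdiag : ∀ p r,
      ∫ ω, conj (u (φ p ω)) * v (φ p ω) * conj (u' (φ r ω)) * v' (φ r ω) ∂μ =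
        ∫ ω, conj (u (φ p ω)) * v (φ p ω) * (conj (u' (φ r ω)) * v' (φ r ω)) ∂μ :=
    fun p r => by simp only [mul_assoc]
  have hcross : ∀ p q,
      ∫ ω, conj (u (φ p ω)) * v (φ q ω) * conj (u' (φ q ω)) * v' (φ p ω) ∂μ =
        ∫ ω, conj (u (φ p ω)) * v' (φ p ω) * (conj (u' (φ q ω)) * v (φ q ω)) ∂μ :=
    fun p q => by congr 1 with ω; ring
  simp only [hdiag, hcross]
  rw [sum_sum_integral_comp_mul_comp_of_iid hφind hφmeas hφid
      (f := fun x => conj (u x) * v x) (g := fun x => conj (u' x) * v' x) (by fun_prop)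
      (by fun_prop),
    sum_sum_integral_comp_mul_comp_of_iid hφind hφmeas hφid
      (f := fun x => conj (u x) * v' x) (g := fun x => conj (u' x) * v x) (by fun_prop)
      (by fun_prop)]
  have hquad :
      ∫ ω, conj (u (φ i₀ ω)) * v' (φ i₀ ω) * (conj (u' (φ i₀ ω)) * v (φ i₀ ω)) ∂μ =
        ∫ ω, conj (u (φ i₀ ω)) * v (φ i₀ ω) * (conj (u' (φ i₀ ω)) * v' (φ i₀ ω)) ∂μ := by
    congr 1 with ω
    ring
  rw [hquad]
  ring

end RandomSum

noncomputable def steeringPhase (κ t x : ℝ) : ℂ :=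
  Complex.exp (-Complex.I * (2 * (Real.pi : ℂ)) * (κ : ℂ) * (t : ℂ) * ((Real.cos x : ℝ) : ℂ))

theorem conj_steeringPhase (κ t x : ℝ) :
    conj (steeringPhase κ t x) = steeringPhase κ (-t) x := by
  rw [steeringPhase, steeringPhase, ← Complex.exp_conj]
  simp only [map_mul, map_neg, Complex.conj_I, map_ofNat, Complex.conj_ofReal]
  push_cast
  ring_nf

theorem steeringPhase_mul (κ s t x : ℝ) :
    steeringPhase κ s x * steeringPhase κ t x = steeringPhase κ (s + t) x := by
  rw [steeringPhase, steeringPhase, steeringPhase, ← Complex.exp_add]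
  push_cast
  ring_nf

theorem norm_steeringPhase (κ t x : ℝ) : ‖steeringPhase κ t x‖ = 1 := by
  rw [steeringPhase, Complex.norm_exp]
  simp

theorem conj_steeringPhase_mul (κ s t x : ℝ) :
    conj (steeringPhase κ s x) * steeringPhase κ t x = steeringPhase κ (t - s) x := by
  rw [conj_steeringPhase, steeringPhase_mul, neg_add_eq_sub]

theorem measurable_steeringPhase (κ t : ℝ) : Measurable (steeringPhase κ t) := by
  unfold steeringPhase
  fun_prop

theorem integral_conj_sum_mul_sum_mul_conj_sum_mul_sum_steeringPhase {Ω ι : Type*}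
    [MeasurableSpace Ω] {μ : Measure Ω} [Fintype ι] [DecidableEq ι] {α : ι → Ω → ℂ}
    {φ : ι → Ω → ℝ} (hαind : iIndepFun α μ) (hαmeas : ∀ p, Measurable (α p))
    (hαL4 : ∀ p, MemLp (α p) 4 μ) (hα1 : ∀ p, ∫ ω, α p ω ∂μ = 0)
    (hα2 : ∀ p, ∫ ω, α p ω ^ 2 ∂μ = 0) {β : ℝ} (hαvar : ∀ p, ∫ ω, ‖α p ω‖ ^ 2 ∂μ = β)
    (hα4 : ∀ p, ∫ ω, ‖α p ω‖ ^ 4 ∂μ = 2 * β ^ 2) (hφind : iIndepFun φ μ)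
    (hφmeas : ∀ p, Measurable (φ p)) {i₀ : ι} (hφid : ∀ p, IdentDistrib (φ p) (φ i₀) μ μ)
    (hαφ : IndepFun (fun ω p => α p ω) (fun ω p => φ p ω) μ) (κ t₁ t₂ t₃ t₄ : ℝ) :
    ∫ ω, conj (∑ p, α p ω * steeringPhase κ t₁ (φ p ω)) *
        (∑ p, α p ω * steeringPhase κ t₂ (φ p ω)) *
        conj (∑ p, α p ω * steeringPhase κ t₃ (φ p ω)) *
        (∑ p, α p ω * steeringPhase κ t₄ (φ p ω)) ∂μ =
      (β : ℂ) ^ 2 * (2 * Fintype.card ι *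
          ∫ ω, steeringPhase κ (t₂ - t₁ + t₄ - t₃) (φ i₀ ω) ∂μ +
        Fintype.card ι * (Fintype.card ι - 1) *
          ((∫ ω, steeringPhase κ (t₂ - t₁) (φ i₀ ω) ∂μ) *
              (∫ ω, steeringPhase κ (t₄ - t₃) (φ i₀ ω) ∂μ) +
            (∫ ω, steeringPhase κ (t₄ - t₁) (φ i₀ ω) ∂μ) *
              ∫ ω, steeringPhase κ (t₂ - t₃) (φ i₀ ω) ∂μ)) := by
  have hmeas := measurable_steeringPhase κ
  have hbound : ∀ t x, ‖steeringPhase κ t x‖ ≤ 1 := fun t x => (norm_steeringPhase κ t x).le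
  rw [integral_conj_sum_mul_sum_mul_conj_sum_mul_sum hαind hαmeas hαL4 hα1 hα2 hαvar hα4 hφind
    hφmeas hφid hαφ (hmeas _) (hmeas _) (hmeas _) (hmeas _) (hbound _) (hbound _) (hbound _)
    (hbound _)]
  simp only [conj_steeringPhase_mul, steeringPhase_mul, add_sub_assoc]

theorem stmt_8_general {Ω : Type*} [MeasurableSpace Ω] (μ : Measure Ω)
    {M NP : ℕ} (hNP : 0 < NP)
    (D lam β : ℝ)
    (α : Fin NP → Ω → ℂ) (φ : Fin NP → Ω → ℝ)
    (hαmeas : ∀ p, Measurable (α p)) (hφmeas : ∀ p, Measurable (φ p))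
    (hαindep : iIndepFun α μ)
    (hφindep : iIndepFun φ μ)
    (hφid : ∀ p q, IdentDistrib (φ p) (φ q) μ μ)
    (hαφindep : IndepFun (fun ω p => α p ω) (fun ω p => φ p ω) μ)
    (hαL4 : ∀ p, MemLp (α p) 4 μ)
    (hαmean : ∀ p, ∫ ω, α p ω ∂μ = 0)
    (hαsq : ∀ p, ∫ ω, (α p ω) ^ 2 ∂μ = 0)
    (hαvar : ∀ p, ∫ ω, ‖α p ω‖ ^ 2 ∂μ = β)
    (hα4 : ∀ p, ∫ ω, ‖α p ω‖ ^ 4 ∂μ = 2 * β ^ 2)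
    (h : Ω → Fin M → ℂ)
    (hdef : ∀ ω m, h ω m = (1 / (Real.sqrt NP : ℂ)) *
      ∑ p, α p ω * Complex.exp (-Complex.I * (2 * (Real.pi : ℂ)) * ((D / lam : ℝ) : ℂ) *
        ((m : ℕ) : ℂ) * ((Real.cos (φ p ω) : ℝ) : ℂ)))
    (Efun : ℤ → ℂ)
    (hE : ∀ z : ℤ, Efun z = ∫ ω, Complex.exp (-Complex.I * (2 * (Real.pi : ℂ)) *
      ((D / lam : ℝ) : ℂ) * ((z : ℝ) : ℂ) * ((Real.cos (φ ⟨0, hNP⟩ ω) : ℝ) : ℂ)) ∂μ) :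
    ∀ m n m' n' : Fin M,
      ∫ ω, (starRingEnd ℂ) (h ω m) * h ω n * (starRingEnd ℂ) (h ω m') * h ω n' ∂μ =
        ((β ^ 2 / NP : ℝ) : ℂ) *
          (2 * Efun (((n : ℕ) : ℤ) - ((m : ℕ) : ℤ) + ((n' : ℕ) : ℤ) - ((m' : ℕ) : ℤ)) +
            ((NP : ℂ) - 1) *
              (Efun (((n : ℕ) : ℤ) - ((m : ℕ) : ℤ)) * Efun (((n' : ℕ) : ℤ) - ((m' : ℕ) : ℤ)) +
               Efun (((n' : ℕ) : ℤ) - ((m : ℕ) : ℤ)) * Efun (((n : ℕ) : ℤ) - ((m' : ℕ) : ℤ)))) := by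
  intro m n m' n'
  have hh : ∀ ω k, h ω k = (((Real.sqrt NP)⁻¹ : ℝ) : ℂ) *
      ∑ p, α p ω * steeringPhase (D / lam) ((k : ℕ) : ℝ) (φ p ω) := by
    intro ω k
    rw [hdef]
    simp [steeringPhase]
  have hEfun : ∀ z : ℤ, ∫ ω, steeringPhase (D / lam) z (φ ⟨0, hNP⟩ ω) ∂μ = Efun z :=
    fun z => (hE z).symm
  have hscale : ((((Real.sqrt NP)⁻¹ : ℝ) : ℂ)) ^ 4 = ((NP : ℂ) ^ 2)⁻¹ := by
    rw [← Complex.ofReal_pow, inv_pow, show Real.sqrt NP ^ 4 = (Real.sqrt NP ^ 2) ^ 2 by ring,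
      Real.sq_sqrt NP.cast_nonneg]
    push_cast
    rfl
  have hNP' : (NP : ℂ) ≠ 0 := by exact_mod_cast hNP.ne'
  simp only [hh, map_mul, Complex.conj_ofReal]
  calc _ = (((Real.sqrt NP)⁻¹ : ℝ) : ℂ) ^ 4 *
        ∫ ω, conj (∑ p, α p ω * steeringPhase (D / lam) ((m : ℕ) : ℝ) (φ p ω)) *
          (∑ p, α p ω * steeringPhase (D / lam) ((n : ℕ) : ℝ) (φ p ω)) *
          conj (∑ p, α p ω * steeringPhase (D / lam) ((m' : ℕ) : ℝ) (φ p ω)) *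
          (∑ p, α p ω * steeringPhase (D / lam) ((n' : ℕ) : ℝ) (φ p ω)) ∂μ := by
        rw [← integral_const_mul]
        congr 1 with ω
        ring
    _ = _ := by
        rw [integral_conj_sum_mul_sum_mul_conj_sum_mul_sum_steeringPhase hαindep hαmeas hαL4
          hαmean hαsq hαvar hα4 hφindep hφmeas (fun p => hφid p ⟨0, hNP⟩) hαφindep,
          hscale, Fintype.card_fin]
        simp only [← hEfun]
        push_cast
        field_simp

/-- Under the ray-based channel model, the fourth-order moments of the channel
entries satisfy
`E[conj(h_m) h_n conj(h_{m'}) h_{n'}]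
  = (β²/N_P)·[2·E(n−m+n'−m') + (N_P−1)·(E(n−m)·E(n'−m') + E(n'−m)·E(n−m'))]`. -/
theorem stmt_8 {Ω : Type*} [MeasurableSpace Ω] (μ : Measure Ω) [IsProbabilityMeasure μ]
    {M NP : ℕ} (hM : 1 ≤ M) (hNP : 0 < NP)
    (D lam β : ℝ) (hD : 0 < D) (hlam : 0 < lam) (hβ : 0 < β)
    (α : Fin NP → Ω → ℂ) (φ : Fin NP → Ω → ℝ)
    (hαmeas : ∀ p, Measurable (α p)) (hφmeas : ∀ p, Measurable (φ p))
    (hαindep : iIndepFun α μ)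
    (hαid : ∀ p q, IdentDistrib (α p) (α q) μ μ)
    (hφindep : iIndepFun φ μ)
    (hφid : ∀ p q, IdentDistrib (φ p) (φ q) μ μ)
    (hαφindep : IndepFun (fun ω p => α p ω) (fun ω p => φ p ω) μ)
    (hαL4 : ∀ p, MemLp (α p) 4 μ)
    (hαmean : ∀ p, ∫ ω, α p ω ∂μ = 0)
    (hαsq : ∀ p, ∫ ω, (α p ω) ^ 2 ∂μ = 0)
    (hαvar : ∀ p, ∫ ω, ‖α p ω‖ ^ 2 ∂μ = β)
    (hα4 : ∀ p, ∫ ω, ‖α p ω‖ ^ 4 ∂μ = 2 * β ^ 2)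
    (h : Ω → Fin M → ℂ)
    (hdef : ∀ ω m, h ω m = (1 / (Real.sqrt NP : ℂ)) *
      ∑ p, α p ω * Complex.exp (-Complex.I * (2 * (Real.pi : ℂ)) * ((D / lam : ℝ) : ℂ) *
        ((m : ℕ) : ℂ) * ((Real.cos (φ p ω) : ℝ) : ℂ)))
    (Efun : ℤ → ℂ)
    (hE : ∀ z : ℤ, Efun z = ∫ ω, Complex.exp (-Complex.I * (2 * (Real.pi : ℂ)) *
      ((D / lam : ℝ) : ℂ) * ((z : ℝ) : ℂ) * ((Real.cos (φ ⟨0, hNP⟩ ω) : ℝ) : ℂ)) ∂μ) :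
    ∀ m n m' n' : Fin M,
      ∫ ω, (starRingEnd ℂ) (h ω m) * h ω n * (starRingEnd ℂ) (h ω m') * h ω n' ∂μ =
        ((β ^ 2 / NP : ℝ) : ℂ) *
          (2 * Efun (((n : ℕ) : ℤ) - ((m : ℕ) : ℤ) + ((n' : ℕ) : ℤ) - ((m' : ℕ) : ℤ)) +
            ((NP : ℂ) - 1) *
              (Efun (((n : ℕ) : ℤ) - ((m : ℕ) : ℤ)) * Efun (((n' : ℕ) : ℤ) - ((m' : ℕ) : ℤ)) +
               Efun (((n' : ℕ) : ℤ) - ((m : ℕ) : ℤ)) * Efun (((n : ℕ) : ℤ) - ((m' : ℕ) : ℤ)))) :=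
  stmt_8_general μ hNP D lam β α φ hαmeas hφmeas hαindep hφindep hφid hαφindep hαL4 hαmean hαsq
    hαvar hα4 h hdef Efun hE
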